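/- Let L ∈ ℝ^{n×n} be invertible, H = L Lᵀ, and let y, s ∈ ℝ^n satisfy yᵀ s > 0 (so s ≠ 0 and sᵀHs > 0). Let α ∈ ℝ satisfy α² = (yᵀ s)/(sᵀ H s) (either sign of the square root), and define L₊ = L + (y − α H s)(Lᵀ s)ᵀ/(α sᵀ H s). Then L₊ L₊ᵀ = H − (H s)(H s)ᵀ/(sᵀ H s) + y yᵀ/(yᵀ s); that is, L₊ L₊ᵀ equals the BFGS update of H. -/

import Mathlib

open Matrix

lemma mul_vmv {n : ℕ} (A : Matrix (Fin n) (Fin n) ℝ) (u v : Fin n → ℝ) :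
    A * vecMulVec u v = vecMulVec (A *ᵥ u) v := by
  ext i j
  simp [mul_apply, vecMulVec_apply, mulVec, dotProduct, Finset.sum_mul]
  congr 1; ext k; ring

lemma vmv_mul {n : ℕ} (u v : Fin n → ℝ) (A : Matrix (Fin n) (Fin n) ℝ) :
    vecMulVec u v * A = vecMulVec u (Aᵀ *ᵥ v) := by
  ext i j
  simp [mul_apply, vecMulVec_apply, mulVec, dotProduct, Finset.mul_sum, transpose_apply]
  congr 1; ext k; ring

lemma vmv_transpose {n : ℕ} (u v : Fin n → ℝ) :
    (vecMulVec u v)ᵀ = vecMulVec v u := by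
  ext i j; simp [vecMulVec_apply, transpose_apply]; ring

lemma vmv_mulVec {n : ℕ} (u v x : Fin n → ℝ) :
    vecMulVec u v *ᵥ x = (v ⬝ᵥ x) • u := by
  ext i
  simp only [vecMulVec_apply, mulVec, dotProduct, Pi.smul_apply, smul_eq_mul, Finset.sum_mul]
  exact Finset.sum_congr rfl fun k _ => by ring

lemma vmv_mul_vmv {n : ℕ} (u v w x : Fin n → ℝ) :
    vecMulVec u v * vecMulVec w x = (v ⬝ᵥ w) • vecMulVec u x := by
  ext i j
  simp [mul_apply, vecMulVec_apply, dotProduct, Finset.sum_mul, Finset.mul_sum]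
  congr 1; ext k; ring

lemma vmv_sub_left {n : ℕ} (u v w : Fin n → ℝ) :
    vecMulVec (u - v) w = vecMulVec u w - vecMulVec v w := by
  ext i j; simp [vecMulVec_apply]; ring

lemma vmv_sub_right {n : ℕ} (u v w : Fin n → ℝ) :
    vecMulVec u (v - w) = vecMulVec u v - vecMulVec u w := by
  ext i j; simp [vecMulVec_apply]; ring

lemma vmv_smul_left {n : ℕ} (a : ℝ) (u w : Fin n → ℝ) :
    vecMulVec (a • u) w = a • vecMulVec u w := by
  ext i j; simp [vecMulVec_apply]; ring

lemma vmv_smul_right {n : ℕ} (a : ℝ) (u w : Fin n → ℝ) :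
    vecMulVec u (a • w) = a • vecMulVec u w := by
  ext i j; simp [vecMulVec_apply]; ring

/-- With `H = L Lᵀ` (`L` invertible), `yᵀ s > 0`, `α² = (yᵀ s)/(sᵀ H s)` and
`L₊ = L + (y − α H s)(Lᵀ s)ᵀ/(α sᵀ H s)`, we have
`L₊ L₊ᵀ = H − (Hs)(Hs)ᵀ/(sᵀHs) + yyᵀ/(yᵀs)`, the BFGS update of `H`. -/
theorem cholesky_factor_bfgs_update {n : ℕ}
    (L : Matrix (Fin n) (Fin n) ℝ) (hL : IsUnit L)
    (H : Matrix (Fin n) (Fin n) ℝ) (hH : H = L * Lᵀ)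
    (y s : Fin n → ℝ) (hys : 0 < y ⬝ᵥ s)
    (α : ℝ) (hα : α ^ 2 = (y ⬝ᵥ s) / (s ⬝ᵥ (H *ᵥ s)))
    (Lp : Matrix (Fin n) (Fin n) ℝ)
    (hLp : Lp = L + (α * (s ⬝ᵥ (H *ᵥ s)))⁻¹ • vecMulVec (y - α • (H *ᵥ s)) (Lᵀ *ᵥ s)) :
    Lp * Lpᵀ =
      H - (s ⬝ᵥ (H *ᵥ s))⁻¹ • vecMulVec (H *ᵥ s) (H *ᵥ s)
        + (y ⬝ᵥ s)⁻¹ • vecMulVec y y := by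
  have hs : s ≠ 0 := by
    rintro rfl; simp at hys
  have hw : Lᵀ *ᵥ s ≠ 0 := by
    intro h
    exact hs (mulVec_injective_iff_isUnit.2 ((Matrix.isUnit_transpose L).mpr hL) (by simpa using h))
  have hβkey : s ⬝ᵥ (H *ᵥ s) = (Lᵀ *ᵥ s) ⬝ᵥ (Lᵀ *ᵥ s) := by
    rw [hH, ← mulVec_mulVec, dotProduct_mulVec, ← mulVec_transpose]
  have hβ : 0 < s ⬝ᵥ (H *ᵥ s) := by
    rw [hβkey]
    rcases (Finset.sum_nonneg fun i _ => mul_self_nonneg ((Lᵀ *ᵥ s) i)).lt_or_eq with h | h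
    · exact h
    · exact absurd (dotProduct_self_eq_zero.1 h.symm) hw
  have hβ0 : s ⬝ᵥ (H *ᵥ s) ≠ 0 := hβ.ne'
  have hd0 : y ⬝ᵥ s ≠ 0 := hys.ne'
  have hα0 : α ≠ 0 := by
    intro h
    rw [h] at hα
    exact hd0 (by field_simp at hα; linarith [hα])
  -- key mulVec fact
  have hHs : H *ᵥ s = L *ᵥ (Lᵀ *ᵥ s) := by rw [hH, ← mulVec_mulVec]
  set w := Lᵀ *ᵥ s with hwdef
  set v := y - α • (H *ᵥ s) with hvdef
  set c := (α * (s ⬝ᵥ (H *ᵥ s)))⁻¹ with hcdef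
  have expand : Lp * Lpᵀ = L * Lᵀ + c • vecMulVec (H *ᵥ s) v + c • vecMulVec v (H *ᵥ s)
      + (c * c * (s ⬝ᵥ (H *ᵥ s))) • vecMulVec v v := by
    rw [hLp, transpose_add, transpose_smul, vmv_transpose]
    simp only [add_mul, mul_add, Matrix.mul_smul, Matrix.smul_mul, mul_vmv, vmv_mul,
      vmv_mul_vmv, vmv_mulVec, vmv_smul_left, transpose_transpose, smul_smul]
    rw [← hHs, ← hβkey]
    module
  rw [expand, ← hH]
  simp only [hvdef, vmv_sub_left, vmv_sub_right, vmv_smul_left, vmv_smul_right, smul_sub,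
    smul_smul]
  have hα2 : α * α = (y ⬝ᵥ s) / (s ⬝ᵥ (H *ᵥ s)) := by rw [← hα]; ring
  have key : α * α * (s ⬝ᵥ (H *ᵥ s)) = y ⬝ᵥ s := by
    rw [hα2]; field_simp
  match_scalars <;> simp only [hcdef] <;> field_simp <;>
    first
      | ring1
      | linear_combination (s ⬝ᵥ (H *ᵥ s)) * key
      | linear_combination (-(s ⬝ᵥ (H *ᵥ s))) * key
      | linear_combination key
      | linear_combination (-2) * key
      | linear_combination (-1) * key
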